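/- arXiv:1412.7289 — 2 statements merged into one kernel-verified Lean document; each statement's English description precedes it below -/
import Mathlib

section
/- Let C be a triangulated category, let S ⊆ R be full subcategories, and let W' be the class of morphisms w such that in any triangle Z --r--> X --w--> Y --s--> ΣZ, the morphism r factors through R^⊥ and s factors through S^⊥. If g : Y → Z and the composite g∘f both belong to W', then f belongs to W'. -/
open CategoryTheory CategoryTheory.Limits CategoryTheory.Pretriangulated

variable {C : Type*} [Category C] [Preadditive C] [HasZeroObject C]
  [HasShift C ℤ] [∀ n : ℤ, Functor.Additive (CategoryTheory.shiftFunctor C n)]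
  [Pretriangulated C]

/-- `f` factors through an object of the set `S`. -/
def FactorsThruSet (S : Set C) {X Y : C} (f : X ⟶ Y) : Prop :=
  ∃ U ∈ S, ∃ (a : X ⟶ U) (b : U ⟶ Y), f = a ≫ b

/-- The right perpendicular subcategory `T^⊥` of a full subcategory `T`. -/
def rperp (T : Set C) : Set C := {Z | ∀ T' ∈ T, ∀ (f : T' ⟶ Z), f = 0}
/-- The class `W'` determined by a pair of subcategories `R`, `S`. -/
def W'class (R S : Set C) {X Y : C} (w : X ⟶ Y) : Prop :=
  ∀ (Z : C) (r : Z ⟶ X) (s : Y ⟶ Z⟦(1:ℤ)⟧),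
    (Triangle.mk r w s ∈ distTriang C) →
      FactorsThruSet (rperp R) r ∧ FactorsThruSet (rperp S) s

/-!
Both halves are diagram chases in long exact `Hom` sequences; no octahedron is needed. Since
`r ≫ f ≫ g = 0`, `r` factors through the fibre `c : F ⟶ X` of `f ≫ g`. For `s`, factor the fibre
`a` of `g` as `a₁ ≫ a₂` through `V ∈ R^⊥ ⊆ S^⊥` and let `κ` be the cone of `a₂ ≫ s`. Then
`s ≫ κ` kills `a` and `f`, hence factors through `g ≫ d`, where `d : Z ⟶ F⟦1⟧` factors through
`S^⊥`. Finally, if `s ≫ κ` factors through `W ∈ S^⊥`, then `s` is the sum of a map through an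
extension of `W` by `V` and a map through `V`, and `S^⊥` is closed under extensions and sums.
-/

section

variable {D : Type*} [Category D]

namespace FactorsThruSet

variable {S : Set D} {X Y : D} {f : X ⟶ Y}

theorem precomp (hf : FactorsThruSet S f) {W : D} (u : W ⟶ X) : FactorsThruSet S (u ≫ f) := by
  obtain ⟨U, hU, a, b, rfl⟩ := hf
  exact ⟨U, hU, u ≫ a, b, by simp⟩

theorem postcomp (hf : FactorsThruSet S f) {W : D} (v : Y ⟶ W) : FactorsThruSet S (f ≫ v) := by
  obtain ⟨U, hU, a, b, rfl⟩ := hf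
  exact ⟨U, hU, a, b ≫ v, by simp⟩

end FactorsThruSet

variable [Preadditive D]

theorem rperp_antitone : Antitone (rperp : Set D → Set D) :=
  fun _ _ hSR _ hZ T hT f => hZ T (hSR hT) f

variable [HasBinaryBiproducts D]

theorem biprod_mem_rperp {S : Set D} {U₁ U₂ : D} (h₁ : U₁ ∈ rperp S) (h₂ : U₂ ∈ rperp S) :
    (U₁ ⊞ U₂) ∈ rperp S := fun T hT f =>
  biprod.hom_ext _ _ (by simpa using h₁ T hT (f ≫ biprod.fst))
    (by simpa using h₂ T hT (f ≫ biprod.snd))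

theorem FactorsThruSet.add_rperp {S : Set D} {X Y : D} {f₁ f₂ : X ⟶ Y}
    (h₁ : FactorsThruSet (rperp S) f₁) (h₂ : FactorsThruSet (rperp S) f₂) :
    FactorsThruSet (rperp S) (f₁ + f₂) := by
  obtain ⟨U₁, hU₁, a₁, b₁, rfl⟩ := h₁
  obtain ⟨U₂, hU₂, a₂, b₂, rfl⟩ := h₂
  exact ⟨U₁ ⊞ U₂, biprod_mem_rperp hU₁ hU₂, biprod.lift a₁ a₂, biprod.desc b₁ b₂, by simp⟩

end

theorem mem_rperp_of_distTriang {S : Set C} {M W V : C} (m : M ⟶ W) (h : W ⟶ V⟦(1:ℤ)⟧)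
    (n : V⟦(1:ℤ)⟧ ⟶ M⟦(1:ℤ)⟧) (hT : Triangle.mk m h n ∈ distTriang C)
    (hW : W ∈ rperp S) (hV : V ∈ rperp S) : M ∈ rperp S := by
  intro T hTS t
  have htm : t⟦(1:ℤ)⟧' ≫ m⟦(1:ℤ)⟧' = 0 := by
    rw [← Functor.map_comp, hW T hTS (t ≫ m), Functor.map_zero]
  obtain ⟨u, hu⟩ : ∃ u : T⟦(1:ℤ)⟧ ⟶ V⟦(1:ℤ)⟧, t⟦(1:ℤ)⟧' = u ≫ n :=
    Triangle.coyoneda_exact₁ _ hT (t⟦(1:ℤ)⟧') htm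
  have hu₀ : u = 0 := by
    rw [← (shiftFunctor C (1:ℤ)).map_preimage u, hV T hTS ((shiftFunctor C (1:ℤ)).preimage u),
      Functor.map_zero]
  apply (shiftFunctor C (1:ℤ)).map_injective
  rw [hu, hu₀, zero_comp, Functor.map_zero]

theorem factorsThruSet_rperp_of_comp_mor₂ {S : Set C} {V Z K : C} {ρ : V ⟶ Z} {κ : Z ⟶ K}
    {ω : K ⟶ V⟦(1:ℤ)⟧} (hT : Triangle.mk ρ κ ω ∈ distTriang C) (hV : V ∈ rperp S)
    {Y : C} {s : Y ⟶ Z} (hs : FactorsThruSet (rperp S) (s ≫ κ)) :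
    FactorsThruSet (rperp S) s := by
  obtain ⟨W, hW, σ₁, σ₂, hσ⟩ := hs
  obtain ⟨M, m, n, hM⟩ := distinguished_cocone_triangle₁ (σ₂ ≫ ω)
  have hκω : κ ≫ ω = 0 := comp_distTriang_mor_zero₂₃ _ hT
  have hmh : (m ≫ σ₂) ≫ ω = 0 := by
    rw [Category.assoc]; exact comp_distTriang_mor_zero₁₂ _ hM
  obtain ⟨β, hβ⟩ : ∃ β : M ⟶ Z, m ≫ σ₂ = β ≫ κ := Triangle.coyoneda_exact₃ _ hT _ hmh
  have hσh : σ₁ ≫ σ₂ ≫ ω = 0 := by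
    rw [← Category.assoc, ← hσ, Category.assoc, hκω, comp_zero]
  obtain ⟨α, hα⟩ : ∃ α : Y ⟶ M, σ₁ = α ≫ m := Triangle.coyoneda_exact₂ _ hM σ₁ hσh
  have hdiff : (s - α ≫ β) ≫ κ = 0 := by
    rw [Preadditive.sub_comp, hσ, hα, Category.assoc, Category.assoc, hβ, sub_self]
  obtain ⟨y, hy⟩ : ∃ y : Y ⟶ V, s - α ≫ β = y ≫ ρ := Triangle.coyoneda_exact₂ _ hT _ hdiff
  have hαβ : FactorsThruSet (rperp S) (α ≫ β) :=
    ⟨M, mem_rperp_of_distTriang m _ n hM hW hV, α, β, rfl⟩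
  rw [← sub_add_cancel s (α ≫ β), hy, add_comm]
  exact hαβ.add_rperp ⟨V, hV, y, ρ, rfl⟩

/-- If `S ⊆ R`, `g` and `g ∘ f` belong to `W'`, then `f` belongs to `W'`. -/
theorem W'class_of_comp_right (R S : Set C) (hSR : S ⊆ R)
    {X Y Z : C} (f : X ⟶ Y) (g : Y ⟶ Z)
    (hg : W'class R S g) (hgf : W'class R S (f ≫ g)) :
    W'class R S f := by
  intro Z' r s hA
  obtain ⟨F, c, d, hC⟩ := distinguished_cocone_triangle₁ (f ≫ g)
  obtain ⟨hc, hd⟩ := hgf F c d hC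
  obtain ⟨Fg, a, b, hB⟩ := distinguished_cocone_triangle₁ g
  obtain ⟨V, hV, a₁, a₂, ha⟩ := (hg Fg a b hB).1
  have hrf : r ≫ f = 0 := comp_distTriang_mor_zero₁₂ _ hA
  have hfs : f ≫ s = 0 := comp_distTriang_mor_zero₂₃ _ hA
  constructor
  · have hrfg : r ≫ f ≫ g = 0 := by rw [← Category.assoc, hrf, zero_comp]
    obtain ⟨r', rfl⟩ : ∃ r' : Z' ⟶ F, r = r' ≫ c := Triangle.coyoneda_exact₂ _ hC r hrfg
    exact hc.precomp r'
  · obtain ⟨K, κ, ω, hK⟩ := distinguished_cocone_triangle (a₂ ≫ s)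
    have hρκ : (a₂ ≫ s) ≫ κ = 0 := comp_distTriang_mor_zero₁₂ _ hK
    have haκ : a ≫ s ≫ κ = 0 := by rw [ha, Category.assoc, ← Category.assoc a₂, hρκ, comp_zero]
    obtain ⟨μ, hμ⟩ : ∃ μ : Z ⟶ K, s ≫ κ = g ≫ μ := Triangle.yoneda_exact₂ _ hB _ haκ
    have hfgμ : (f ≫ g) ≫ μ = 0 := by
      rw [Category.assoc, ← hμ, ← Category.assoc, hfs, zero_comp]
    obtain ⟨ν, rfl⟩ : ∃ ν : F⟦(1:ℤ)⟧ ⟶ K, μ = d ≫ ν := Triangle.yoneda_exact₃ _ hC μ hfgμ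
    refine factorsThruSet_rperp_of_comp_mor₂ hK (rperp_antitone hSR hV) ?_
    rw [hμ]
    exact (hd.postcomp ν).precomp g
end

section
/- Let C be a triangulated category and T a contravariantly finite rigid full subcategory. Any weak equivalence f : X → Y between objects of T * ΣT is a homotopy equivalence: there exists ε : Y → X such that f∘ε − 1_Y and ε∘f − 1_X both factor through objects of ΣT. -/
open CategoryTheory CategoryTheory.Limits CategoryTheory.Pretriangulated

variable {C : Type*} [Category C] [Preadditive C] [HasZeroObject C]
  [HasShift C ℤ] [∀ n : ℤ, Functor.Additive (CategoryTheory.shiftFunctor C n)]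
  [Pretriangulated C]

/-- The class `W` of morphisms whose connecting morphisms in any triangle factor
through `T^⊥`. -/
def Wclass (T : Set C) {X Y : C} (f : X ⟶ Y) : Prop :=
  ∀ (Z : C) (r : Z ⟶ X) (s : Y ⟶ Z⟦(1:ℤ)⟧),
    (Triangle.mk r f s ∈ distTriang C) →
      FactorsThruSet (rperp T) r ∧ FactorsThruSet (rperp T) s

/-- A subcategory `T` is rigid if `C(T, ΣT) = 0`. -/
def IsRigid (T : Set C) : Prop :=
  ∀ T' ∈ T, ∀ T'' ∈ T, ∀ (f : T' ⟶ (T'' : C)⟦(1:ℤ)⟧), f = 0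

/-- A subcategory is contravariantly finite if every object admits a right approximation. -/
def ContravariantlyFinite (T : Set C) : Prop :=
  ∀ X : C, ∃ T₀ ∈ T, ∃ (p : T₀ ⟶ X), ∀ T' ∈ T, ∀ (u : T' ⟶ X), ∃ v : T' ⟶ T₀, v ≫ p = u

/-- The subcategory `T * ΣT` of cones of morphisms of `T`. -/
def TstarSigmaT (T : Set C) : Set C :=
  {A | ∃ T₁ ∈ T, ∃ T₀ ∈ T, ∃ (a : T₁ ⟶ (T₀ : C)) (b : (T₀ : C) ⟶ A)
    (c : A ⟶ (T₁ : C)⟦(1:ℤ)⟧), Triangle.mk a b c ∈ distTriang C}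

/-!
A weak equivalence `f : X ⟶ Y` induces bijections `C(T', X) ≃ C(T', Y)` for `T' ∈ T`, since the
connecting morphisms of its triangle factor through `T^⊥` and hence vanish on `T`.
Given a triangle `T₁ → T₀ --b--> Y --c--> ΣT₁`, lifting `b` along `f` and extending the lift over
`b` gives `ε` with `b ε f = b`, so `ε f - 1` kills `T₀` and factors through `c`.
Given a triangle `S₁ → S₀ --b'--> X --c'--> ΣS₁`, rigidity kills `b' f c`, so `b' f ε f = b' f`;
injectivity on `C(S₀, -)` yields `b' f ε = b'`, and `f ε - 1` factors through `c'`.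
-/

theorem comp_eq_zero_of_factorsThruSet_rperp {D : Type*} [Category D] [Preadditive D]
    {T : Set D} {A B : D} {h : A ⟶ B}
    (hh : FactorsThruSet (rperp T) h) {T' : D} (hT' : T' ∈ T) (g : T' ⟶ A) :
    g ≫ h = 0 := by
  obtain ⟨U, hU, p, q, rfl⟩ := hh
  rw [← Category.assoc, hU T' hT' (g ≫ p), zero_comp]

namespace Wclass

variable {T : Set C} {X Y : C} {f : X ⟶ Y}

theorem exists_lift (hf : Wclass T f) {T' : C} (hT' : T' ∈ T) (u : T' ⟶ Y) :
    ∃ g : T' ⟶ X, g ≫ f = u := by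
  obtain ⟨Z, r, s, hZ⟩ := distinguished_cocone_triangle₁ f
  obtain ⟨g, hg⟩ := Triangle.coyoneda_exact₃ _ hZ u
    (comp_eq_zero_of_factorsThruSet_rperp (hf Z r s hZ).2 hT' u)
  exact ⟨g, hg.symm⟩

theorem eq_of_comp_eq (hf : Wclass T f) {T' : C} (hT' : T' ∈ T) {g₁ g₂ : T' ⟶ X}
    (h : g₁ ≫ f = g₂ ≫ f) : g₁ = g₂ := by
  obtain ⟨Z, r, s, hZ⟩ := distinguished_cocone_triangle₁ f
  have hsub : (g₁ - g₂) ≫ f = 0 := by rw [Preadditive.sub_comp, h, sub_self]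
  obtain ⟨w, hw⟩ : ∃ w : T' ⟶ Z, g₁ - g₂ = w ≫ r := Triangle.coyoneda_exact₂ _ hZ _ hsub
  rw [← sub_eq_zero, hw]
  exact comp_eq_zero_of_factorsThruSet_rperp (hf Z r s hZ).1 hT' w

theorem exists_rightInverse_up_to (hf : Wclass T f) {T₁ T₀ : C} (hT₁ : T₁ ∈ T) (hT₀ : T₀ ∈ T)
    {a : T₁ ⟶ T₀} {b : T₀ ⟶ Y} {c : Y ⟶ T₁⟦(1:ℤ)⟧} (hY : Triangle.mk a b c ∈ distTriang C) :
    ∃ (ε : Y ⟶ X) (h : T₁⟦(1:ℤ)⟧ ⟶ Y), ε ≫ f - 𝟙 Y = c ≫ h := by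
  obtain ⟨g, hg⟩ := hf.exists_lift hT₀ b
  have hag : a ≫ g = 0 := hf.eq_of_comp_eq hT₁ <| by
    rw [Category.assoc, hg, zero_comp]
    exact comp_distTriang_mor_zero₁₂ _ hY
  obtain ⟨ε, hε⟩ : ∃ ε : Y ⟶ X, g = b ≫ ε := Triangle.yoneda_exact₂ _ hY g hag
  have hb : b ≫ (ε ≫ f - 𝟙 Y) = 0 := by
    rw [Preadditive.comp_sub, ← Category.assoc, ← hε, hg, Category.comp_id, sub_self]
  obtain ⟨h, hh⟩ := Triangle.yoneda_exact₃ _ hY _ hb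
  exact ⟨ε, h, hh⟩

theorem exists_leftInverse_up_to (hf : Wclass T f) (hrig : IsRigid T) {T₁ : C} (hT₁ : T₁ ∈ T)
    {c : Y ⟶ T₁⟦(1:ℤ)⟧} {ε : Y ⟶ X} {h : T₁⟦(1:ℤ)⟧ ⟶ Y} (hε : ε ≫ f - 𝟙 Y = c ≫ h)
    {S₁ S₀ : C} (hS₀ : S₀ ∈ T) {a' : S₁ ⟶ S₀} {b' : S₀ ⟶ X} {c' : X ⟶ S₁⟦(1:ℤ)⟧}
    (hX : Triangle.mk a' b' c' ∈ distTriang C) :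
    ∃ k : S₁⟦(1:ℤ)⟧ ⟶ X, f ≫ ε - 𝟙 X = c' ≫ k := by
  have hεf : ε ≫ f = 𝟙 Y + c ≫ h := by rw [← hε, add_sub_cancel]
  have hb'fε : b' ≫ f ≫ ε = b' := hf.eq_of_comp_eq hS₀ <| by
    calc (b' ≫ f ≫ ε) ≫ f = b' ≫ f ≫ (ε ≫ f) := by simp only [Category.assoc]
      _ = b' ≫ f + (b' ≫ f ≫ c) ≫ h := by
        simp only [hεf, Preadditive.comp_add, Category.comp_id, Category.assoc]
      _ = b' ≫ f := by rw [hrig S₀ hS₀ T₁ hT₁ (b' ≫ f ≫ c), zero_comp, add_zero]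
  have hb' : b' ≫ (f ≫ ε - 𝟙 X) = 0 := by
    rw [Preadditive.comp_sub, hb'fε, Category.comp_id, sub_self]
  exact Triangle.yoneda_exact₃ _ hX _ hb'

end Wclass

theorem weq_is_homotopy_equivalence_general (T : Set C)
    (hrig : IsRigid T)
    {X Y : C} (hX : X ∈ TstarSigmaT T) (hY : Y ∈ TstarSigmaT T)
    (f : X ⟶ Y) (hf : Wclass T f) :
    ∃ ε : Y ⟶ X,
      (∃ T' ∈ T, ∃ (a : Y ⟶ ((T' : C)⟦(1:ℤ)⟧)) (b : ((T' : C)⟦(1:ℤ)⟧) ⟶ Y),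
        ε ≫ f - 𝟙 Y = a ≫ b) ∧
      (∃ T' ∈ T, ∃ (a : X ⟶ ((T' : C)⟦(1:ℤ)⟧)) (b : ((T' : C)⟦(1:ℤ)⟧) ⟶ X),
        f ≫ ε - 𝟙 X = a ≫ b) := by
  obtain ⟨S₁, hS₁, S₀, hS₀, _, _, c', hXtri⟩ := hX
  obtain ⟨T₁, hT₁, T₀, hT₀, _, _, c, hYtri⟩ := hY
  obtain ⟨ε, h, hε⟩ := hf.exists_rightInverse_up_to hT₁ hT₀ hYtri
  obtain ⟨k, hk⟩ := hf.exists_leftInverse_up_to hrig hT₁ hε hS₀ hXtri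
  exact ⟨ε, ⟨T₁, hT₁, c, h, hε⟩, ⟨S₁, hS₁, c', k, hk⟩⟩

/-- Any weak equivalence between objects of `T * ΣT` is a homotopy equivalence:
it admits an inverse up to morphisms factoring through `ΣT`. -/
theorem weq_is_homotopy_equivalence (T : Set C)
    (hcf : ContravariantlyFinite T) (hrig : IsRigid T)
    {X Y : C} (hX : X ∈ TstarSigmaT T) (hY : Y ∈ TstarSigmaT T)
    (f : X ⟶ Y) (hf : Wclass T f) :
    ∃ ε : Y ⟶ X,
      (∃ T' ∈ T, ∃ (a : Y ⟶ ((T' : C)⟦(1:ℤ)⟧)) (b : ((T' : C)⟦(1:ℤ)⟧) ⟶ Y),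
        ε ≫ f - 𝟙 Y = a ≫ b) ∧
      (∃ T' ∈ T, ∃ (a : X ⟶ ((T' : C)⟦(1:ℤ)⟧)) (b : ((T' : C)⟦(1:ℤ)⟧) ⟶ X),
        f ≫ ε - 𝟙 X = a ≫ b) :=
  weq_is_homotopy_equivalence_general T hrig hX hY f hf
end
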